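/- arXiv:1504.02168 — 2 statements merged into one kernel-verified Lean document; each statement's English description precedes it below -/
import Mathlib

section
/- In an ICC digraph, any directed cycle that contains a vertex v of a Type-II path P_{i,j} must also contain the terminal vertex v_{n_j}^j of the Type-I path P_j. -/
/-- An ICC digraph with `k` Type-I paths. `n1 i ≥ 1` is the number of vertices of
Type-I path `P_i`; `n2 i j` is the number of vertices of Type-II path `P_{i,j}`
(`0` if empty, and `n2 i i = 0`); `q i j` (1-based, `1 ≤ q i j ≤ n1 j`) is the
index of the vertex of `P_j` that the arc leaving `P_{i,j}` (or, if `P_{i,j}` is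
empty, the arc leaving the terminal vertex of `P_i`) points to. -/
structure ICCDigraph (k : ℕ) where
  n1 : Fin k → ℕ
  hn1 : ∀ i, 1 ≤ n1 i
  n2 : Fin k → Fin k → ℕ
  hdiag : ∀ i, n2 i i = 0
  q : Fin k → Fin k → ℕ
  hq1 : ∀ i j, 1 ≤ q i j
  hq2 : ∀ i j, q i j ≤ n1 j

namespace ICCDigraph

variable {k : ℕ} (D : ICCDigraph k)

/-- The vertex set: vertices `v_{a+1}^i = ⟨i, a⟩` of Type-I paths (0-based `a`),
and vertices `v_{b+1}^{ij} = ⟨(i,j), b⟩` of Type-II paths. -/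
abbrev Vtx : Type :=
  (Σ i : Fin k, Fin (D.n1 i)) ⊕ (Σ p : Fin k × Fin k, Fin (D.n2 p.1 p.2))

/-- The terminal vertex `v_{n_i}^i` of Type-I path `P_i`. -/
def terminal (i : Fin k) : D.Vtx :=
  Sum.inl ⟨i, ⟨D.n1 i - 1, by have := D.hn1 i; omega⟩⟩

/-- The arc relation of the ICC digraph: arcs along Type-I and Type-II paths,
and the interconnecting arcs. -/
def Arc : D.Vtx → D.Vtx → Prop
  | Sum.inl ⟨i, a⟩, Sum.inl ⟨j, a'⟩ =>
      (i = j ∧ (a' : ℕ) = (a : ℕ) + 1) ∨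
      (i ≠ j ∧ (a : ℕ) = D.n1 i - 1 ∧ D.n2 i j = 0 ∧ (a' : ℕ) = D.q i j - 1)
  | Sum.inl ⟨i, a⟩, Sum.inr ⟨p, b⟩ =>
      i = p.1 ∧ (a : ℕ) = D.n1 i - 1 ∧ (b : ℕ) = 0
  | Sum.inr ⟨p, b⟩, Sum.inr ⟨p', b'⟩ =>
      p = p' ∧ (b' : ℕ) = (b : ℕ) + 1
  | Sum.inr ⟨p, b⟩, Sum.inl ⟨j, a⟩ =>
      p.2 = j ∧ (b : ℕ) = D.n2 p.1 p.2 - 1 ∧ (a : ℕ) = D.q p.1 p.2 - 1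

/-- A closed directed walk (cycle) starting and ending at `v`, visiting the
vertices `v :: l`. -/
def IsClosedWalk (v : D.Vtx) (l : List D.Vtx) : Prop :=
  List.Chain D.Arc v (l ++ [v])

/-- `S` induces an acyclic subdigraph: no directed cycle lies within `S`. -/
def AcyclicOn (S : Finset D.Vtx) : Prop :=
  ¬ ∃ (v : D.Vtx) (l : List D.Vtx), v ∈ S ∧ (∀ u ∈ l, u ∈ S) ∧ D.IsClosedWalk v l

open Classical in
/-- `MAIS(D)`: the maximum order of an acyclic induced subdigraph. -/
noncomputable def mais : ℕ :=
  (Finset.univ.filter fun S : Finset D.Vtx => D.AcyclicOn S).sup Finset.card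

/-- The message (1-based index `a`) of the `a`-th vertex of Type-I path `P_i`
(`0` if out of range). -/
def msgI {t : ℕ} (x : D.Vtx → Fin t → ZMod 2) (i : Fin k) (a : ℕ) :
    Fin t → ZMod 2 :=
  if h : 1 ≤ a ∧ a ≤ D.n1 i then x (Sum.inl ⟨i, ⟨a - 1, by omega⟩⟩) else 0

/-- The message (1-based index `b`) of the `b`-th vertex of Type-II path
`P_{i,j}` (`0` if out of range). -/
def msgII {t : ℕ} (x : D.Vtx → Fin t → ZMod 2) (i j : Fin k) (b : ℕ) :
    Fin t → ZMod 2 :=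
  if h : 1 ≤ b ∧ b ≤ D.n2 i j then x (Sum.inr ⟨(i, j), ⟨b - 1, by show b - 1 < D.n2 i j; omega⟩⟩) else 0

/-- Index set of the ICC code's codewords: the `n_i - 1` codewords along each
Type-I path, the `n_{ij} - 1` codewords along each Type-II path, one codeword per
nonempty Type-II path, and the single codeword `⊕ᵢ x_{n_i}^i`. -/
abbrev CodeIdx : Type :=
  (Σ i : Fin k, Fin (D.n1 i - 1)) ⊕
    ((Σ p : Fin k × Fin k, Fin (D.n2 p.1 p.2 - 1)) ⊕
      (({p : Fin k × Fin k // 1 ≤ D.n2 p.1 p.2}) ⊕ Unit))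

/-- The ICC code: `w_a^i = x_a^i ⊕ x_{a+1}^i`, `w_b^{ij} = x_b^{ij} ⊕ x_{b+1}^{ij}`,
`w_{n_{ij}}^{ij} = x_{n_{ij}}^{ij} ⊕ x_{q_i}^j`, and `w' = ⊕ᵢ x_{n_i}^i`. -/
def code {t : ℕ} (x : D.Vtx → Fin t → ZMod 2) : D.CodeIdx → Fin t → ZMod 2
  | Sum.inl ⟨i, a⟩ => D.msgI x i ((a : ℕ) + 1) + D.msgI x i ((a : ℕ) + 2)
  | Sum.inr (Sum.inl ⟨p, b⟩) =>
      D.msgII x p.1 p.2 ((b : ℕ) + 1) + D.msgII x p.1 p.2 ((b : ℕ) + 2)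
  | Sum.inr (Sum.inr (Sum.inl ⟨p, _⟩)) =>
      D.msgII x p.1 p.2 (D.n2 p.1 p.2) + D.msgI x p.2 (D.q p.1 p.2)
  | Sum.inr (Sum.inr (Sum.inr _)) => ∑ i : Fin k, D.msgI x i (D.n1 i)

end ICCDigraph

/-!
Every arc leaving a vertex of `P_{i,j}`, or a non-terminal vertex of `P_j`, ends again on `P_j`
or on some `P_{i',j}`, and strictly closer to `v_{n_j}^j`. Every vertex of a directed cycle has
its successor on the cycle, so a cycle through `P_{i,j}` can never leave this region, and the
strictly decreasing distance forces it through `v_{n_j}^j`.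
-/

theorem List.Forall₂.exists_mem_rel_of_mem {α β : Type*} {R : α → β → Prop} {l₁ : List α}
    {l₂ : List β} (h : List.Forall₂ R l₁ l₂) {a : α} (ha : a ∈ l₁) : ∃ b ∈ l₂, R a b := by
  induction h with
  | nil => simp at ha
  | cons hr _ ih =>
    rcases List.mem_cons.1 ha with rfl | ha
    · exact ⟨_, List.mem_cons_self, hr⟩
    · obtain ⟨b, hb, hab⟩ := ih ha
      exact ⟨b, List.mem_cons_of_mem _ hb, hab⟩

theorem mem_of_forall_exists_rel_of_decreasing {α : Type*} {R : α → α → Prop} {C : Set α}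
    (hC : ∀ u ∈ C, ∃ w ∈ C, R u w) (P : α → Prop) (f : α → ℕ) {t : α}
    (hstep : ∀ u w, P u → u ≠ t → R u w → P w ∧ f w < f u) {u : α} (hu : u ∈ C) (hPu : P u) :
    t ∈ C := by
  induction h : f u using Nat.strong_induction_on generalizing u with
  | _ n ih =>
    by_cases hut : u = t
    · exact hut ▸ hu
    obtain ⟨w, hw, huw⟩ := hC u hu
    obtain ⟨hPw, hfw⟩ := hstep u w hPu hut huw
    exact ih (f w) (h ▸ hfw) hw hPw rfl

namespace ICCDigraph

variable {k : ℕ} {D : ICCDigraph k}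

theorem IsClosedWalk.exists_arc_mem {v : D.Vtx} {l : List D.Vtx} (hc : D.IsClosedWalk v l)
    {u : D.Vtx} (hu : u ∈ v :: l) : ∃ w ∈ v :: l, D.Arc u w := by
  obtain ⟨w, hw, huw⟩ :=
    (List.isChain_cons_append_singleton_iff_forall₂.1 hc).exists_mem_rel_of_mem hu
  exact ⟨w, (List.perm_append_singleton v l).subset hw, huw⟩

variable (D)

/-- The Type-I path that a vertex runs into: `P_i` for a vertex of `P_i` or of `P_{h,i}`. -/
def lane : D.Vtx → Fin k
  | Sum.inl ⟨i, _⟩ => i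
  | Sum.inr ⟨p, _⟩ => p.2

/-- An upper bound on the number of arcs from a vertex to the terminal vertex of its lane. -/
def distToTerminal : D.Vtx → ℕ
  | Sum.inl ⟨i, a⟩ => D.n1 i - a
  | Sum.inr ⟨p, b⟩ => D.n2 p.1 p.2 - b + D.n1 p.2

theorem lane_eq_and_distToTerminal_lt_of_arc {u w : D.Vtx} (hu : u ≠ D.terminal (D.lane u))
    (huw : D.Arc u w) : D.lane w = D.lane u ∧ D.distToTerminal w < D.distToTerminal u := by
  rcases u with ⟨i, a⟩ | ⟨p, b⟩ <;> rcases w with ⟨j, a'⟩ | ⟨p', b'⟩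
  · have ha : (a : ℕ) ≠ D.n1 i - 1 := fun ha => hu (by simp [lane, terminal, Fin.ext_iff, ha])
    rcases huw with ⟨rfl, ha'⟩ | ⟨-, ha', -⟩
    · exact ⟨rfl, by simp only [distToTerminal]; omega⟩
    · exact absurd ha' ha
  · exact absurd huw.2.1 fun ha => hu (by simp [lane, terminal, Fin.ext_iff, ha])
  · obtain ⟨rfl, -, -⟩ := huw
    have := b.isLt
    exact ⟨rfl, by simp only [distToTerminal]; omega⟩
  · obtain ⟨rfl, hb'⟩ := huw
    have := b'.isLt
    exact ⟨rfl, by simp only [distToTerminal]; omega⟩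

end ICCDigraph

/-- Any directed cycle containing a vertex of Type-II path
`P_{i,j}` also contains the terminal vertex `v_{n_j}^j` of Type-I path `P_j`. -/
theorem stmt5 {k : ℕ} (D : ICCDigraph k) (i j : Fin k) (b : Fin (D.n2 i j))
    (v : D.Vtx) (l : List D.Vtx) (hc : D.IsClosedWalk v l)
    (hmem : (Sum.inr ⟨(i, j), b⟩ : D.Vtx) ∈ v :: l) :
    D.terminal j ∈ v :: l :=
  mem_of_forall_exists_rel_of_decreasing (C := {u | u ∈ v :: l})
    (fun _ hu => hc.exists_arc_mem hu) (fun u => D.lane u = j) D.distToTerminal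
    (fun _ _ hu hut huw => by
      subst hu
      exact D.lane_eq_and_distToTerminal_lt_of_arc hut huw)
    hmem rfl
end

section
/- For any ICC digraph D with k Type-I paths, n vertices, and t-bit messages (any t ≥ 1), the optimal index code length satisfies ℓ*_t(D) = n − k + 1; hence the ICC code is optimal. -/
/-! The ICC code consists of `n - k + 1` XOR-codewords that chain every vertex to its
successor on its path, plus one codeword `⊕ᵢ x(terminal i)`. A receiver that is not a
terminal knows its successor and reads its own message off its chain codeword; the terminal
of `P_i` knows the first vertex after `P_i`, unrolls the chains up to every other terminal,
and reads its message off the last codeword.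

Conversely, deleting the terminals of all Type-I paths but one leaves an acyclic set `S` of
`n - k + 1` vertices. For messages vanishing outside `S`, the receivers in `S` can be decoded
along a topological order of `S`, so the encoding is injective on `2 ^ (t * |S|)` message
vectors and needs at least `t * |S|` bits. -/

section IndexCoding

variable {V A M N : Type*} {Arc : V → V → Prop} {E : (V → A) → M}

def IsIndexCode (Arc : V → V → Prop) (E : (V → A) → M) : Prop :=
  ∀ v, ∃ g : M → ({u // Arc v u} → A) → A, ∀ x, g (E x) (fun u => x u.1) = x v

theorem IsIndexCode.eq_of_eq (hE : IsIndexCode Arc E) {v : V} {x x' : V → A}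
    (hx : E x = E x') (hside : ∀ u, Arc v u → x u = x' u) : x v = x' v := by
  obtain ⟨g, hg⟩ := hE v
  rw [← hg x, ← hg x', hx]
  congr 1
  funext u
  exact hside u u.2

theorem isIndexCode_of_forall_eq [Nonempty A]
    (h : ∀ v x x', E x = E x' → (∀ u, Arc v u → x u = x' u) → x v = x' v) :
    IsIndexCode Arc E := by
  intro v
  let decode (w : M) (s : {u // Arc v u} → A) : V → A :=
    Classical.epsilon fun y => E y = w ∧ (fun u : {u // Arc v u} => y u.1) = s
  refine ⟨fun w s => decode w s v, fun x => ?_⟩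
  obtain ⟨hEx, hside⟩ := Classical.epsilon_spec (p := fun y =>
    E y = E x ∧ (fun u : {u // Arc v u} => y u.1) = fun u => x u.1) ⟨x, rfl, rfl⟩
  exact h v _ x hEx fun u hu => congrFun hside ⟨u, hu⟩

theorem IsIndexCode.comp [Nonempty A] (hE : IsIndexCode Arc E) {f : M → N}
    (hf : Function.Injective f) : IsIndexCode Arc (f ∘ E) :=
  isIndexCode_of_forall_eq fun _ _ _ hx => hE.eq_of_eq (hf hx)

/-- Decoding the receivers of `S` in decreasing order of `ρ`: each one's side information
inside `S` is already known. -/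
theorem IsIndexCode.eq_of_eqOn_compl (hE : IsIndexCode Arc E) {S : Set V} (ρ : V → ℕ)
    (hρ : ∀ v ∈ S, ∀ u ∈ S, Arc v u → ρ u < ρ v) {x x' : V → A} (hx : E x = E x')
    (hout : Set.EqOn x x' Sᶜ) : x = x' := by
  funext v
  induction hn : ρ v using Nat.strong_induction_on generalizing v with
  | _ n ih =>
    by_cases hv : v ∈ S
    · refine hE.eq_of_eq hx fun u huv => ?_
      by_cases hu : u ∈ S
      · exact ih _ (hn ▸ hρ v hv u hu huv) u rfl
      · exact hout hu
    · exact hout hv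

theorem IsIndexCode.card_pow_le [Fintype A] [Fintype M] [Nonempty A]
    (hE : IsIndexCode Arc E) (S : Finset V) (ρ : V → ℕ)
    (hρ : ∀ v ∈ S, ∀ u ∈ S, Arc v u → ρ u < ρ v) :
    Fintype.card A ^ S.card ≤ Fintype.card M := by
  classical
  let fill (y : S → A) : V → A := Function.extend Subtype.val y fun _ => Classical.arbitrary A
  have hinj : Function.Injective (E ∘ fill) := by
    intro y y' hy
    have hfill := hE.eq_of_eqOn_compl (S := S) ρ hρ hy fun v hv => by
      have hv' : ¬∃ u : S, u.1 = v := fun ⟨u, hu⟩ => hv (hu ▸ u.2)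
      simp only [fill, Function.extend_apply' _ _ _ hv']
    funext u
    simpa [fill, Subtype.val_injective.extend_apply] using congrFun hfill u.1
  simpa using Fintype.card_le_of_injective _ hinj

end IndexCoding

theorem eq_of_add_succ_eq {G : Type*} [Add G] [IsLeftCancelAdd G] {f f' : ℕ → G} {c d : ℕ}
    (hcd : c ≤ d) (hc : f c = f' c)
    (hstep : ∀ a, c ≤ a → a < d → f a + f (a + 1) = f' a + f' (a + 1)) : f d = f' d := by
  induction d, hcd using Nat.le_induction with
  | base => exact hc
  | succ d hcd ih =>
    have hw := hstep d hcd d.lt_succ_self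
    rw [ih fun a ha had => hstep a ha (had.trans d.lt_succ_self)] at hw
    exact add_left_cancel hw

namespace ICCDigraph

section Basic

variable {k : ℕ} (D : ICCDigraph k)

theorem card_vtx :
    Fintype.card D.Vtx = ∑ i, D.n1 i + ∑ p : Fin k × Fin k, D.n2 p.1 p.2 := by
  simp [Fintype.card_sum, Fintype.card_sigma]

theorem n1_le_card_vtx (i : Fin k) : D.n1 i ≤ Fintype.card D.Vtx := by
  rw [card_vtx]
  exact le_add_right (Finset.single_le_sum (fun _ _ => Nat.zero_le _) (Finset.mem_univ i))

theorem n2_le_card_vtx (i j : Fin k) : D.n2 i j ≤ Fintype.card D.Vtx := by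
  rw [card_vtx]
  exact le_add_left (Finset.single_le_sum (f := fun p : Fin k × Fin k => D.n2 p.1 p.2)
    (fun _ _ => Nat.zero_le _) (Finset.mem_univ (i, j)))

theorem sum_n1_sub_one_add : ∑ i, (D.n1 i - 1) + k = ∑ i, D.n1 i := by
  calc ∑ i, (D.n1 i - 1) + k = ∑ i, (D.n1 i - 1 + 1) := by
        rw [Finset.sum_add_distrib]; simp
    _ = ∑ i, D.n1 i := Finset.sum_congr rfl fun i _ => Nat.sub_add_cancel (D.hn1 i)

theorem card_codeIdx : Fintype.card D.CodeIdx = Fintype.card D.Vtx - k + 1 := by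
  classical
  have hII : ∑ p : Fin k × Fin k, (D.n2 p.1 p.2 - 1)
      + Fintype.card {p : Fin k × Fin k // 1 ≤ D.n2 p.1 p.2}
      = ∑ p : Fin k × Fin k, D.n2 p.1 p.2 := by
    rw [Fintype.card_subtype, Finset.card_filter, ← Finset.sum_add_distrib]
    exact Finset.sum_congr rfl fun p _ => by split_ifs <;> omega
  have hI := D.sum_n1_sub_one_add
  simp only [Fintype.card_sum, Fintype.card_sigma, Fintype.card_fin, Fintype.card_unit]
  omega

theorem terminal_injective : Function.Injective D.terminal :=
  fun _ _ h => congrArg Sigma.fst (Sum.inl.inj h)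

theorem eq_terminal {i : Fin k} {a : Fin (D.n1 i)} (ha : (a : ℕ) = D.n1 i - 1) :
    (Sum.inl ⟨i, a⟩ : D.Vtx) = D.terminal i :=
  congrArg Sum.inl (congrArg (Sigma.mk i) (Fin.ext ha))

end Basic

section Decoding

variable {k t : ℕ} {D : ICCDigraph k} {x x' : D.Vtx → Fin t → ZMod 2}

theorem msgI_of_le (x : D.Vtx → Fin t → ZMod 2) {i : Fin k} {a : ℕ} (h1 : 1 ≤ a)
    (h2 : a ≤ D.n1 i) : D.msgI x i a = x (Sum.inl ⟨i, ⟨a - 1, by omega⟩⟩) :=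
  dif_pos ⟨h1, h2⟩

theorem msgII_of_le (x : D.Vtx → Fin t → ZMod 2) {i j : Fin k} {b : ℕ} (h1 : 1 ≤ b)
    (h2 : b ≤ D.n2 i j) :
    D.msgII x i j b = x (Sum.inr ⟨(i, j), ⟨b - 1, show b - 1 < D.n2 i j by omega⟩⟩) :=
  dif_pos ⟨h1, h2⟩

theorem msgI_add_msgI_succ_eq (hcode : D.code x = D.code x') {i : Fin k} {a : ℕ}
    (h1 : 1 ≤ a) (h2 : a < D.n1 i) :
    D.msgI x i a + D.msgI x i (a + 1) = D.msgI x' i a + D.msgI x' i (a + 1) := by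
  obtain ⟨a, rfl⟩ := Nat.exists_eq_add_of_le' h1
  exact congrFun hcode (Sum.inl ⟨i, ⟨a, by omega⟩⟩)

theorem msgII_add_msgII_succ_eq (hcode : D.code x = D.code x') {i j : Fin k} {b : ℕ}
    (h1 : 1 ≤ b) (h2 : b < D.n2 i j) :
    D.msgII x i j b + D.msgII x i j (b + 1) = D.msgII x' i j b + D.msgII x' i j (b + 1) := by
  obtain ⟨b, rfl⟩ := Nat.exists_eq_add_of_le' h1
  exact congrFun hcode (Sum.inr (Sum.inl ⟨(i, j), ⟨b, show b < D.n2 i j - 1 by omega⟩⟩))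

theorem msgII_last_add_msgI_q_eq (hcode : D.code x = D.code x') {i j : Fin k}
    (h : 1 ≤ D.n2 i j) :
    D.msgII x i j (D.n2 i j) + D.msgI x j (D.q i j)
      = D.msgII x' i j (D.n2 i j) + D.msgI x' j (D.q i j) :=
  congrFun hcode (Sum.inr (Sum.inr (Sum.inl ⟨(i, j), h⟩)))

theorem msgI_q_eq_of_terminal (hcode : D.code x = D.code x') {i j : Fin k} (hji : j ≠ i)
    (hside : ∀ u, D.Arc (D.terminal i) u → x u = x' u) :
    D.msgI x j (D.q i j) = D.msgI x' j (D.q i j) := by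
  have hq1 := D.hq1 i j
  have hq2 := D.hq2 i j
  rcases Nat.eq_zero_or_pos (D.n2 i j) with hz | hpos
  · rw [msgI_of_le x hq1 hq2, msgI_of_le x' hq1 hq2]
    exact hside _ (Or.inr ⟨hji.symm, rfl, hz, rfl⟩)
  · have hfirst : D.msgII x i j 1 = D.msgII x' i j 1 := by
      rw [msgII_of_le x le_rfl hpos, msgII_of_le x' le_rfl hpos]
      exact hside _ ⟨rfl, rfl, rfl⟩
    have hlast := eq_of_add_succ_eq hpos hfirst fun b hb hbn =>
      msgII_add_msgII_succ_eq hcode hb hbn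
    have hw := msgII_last_add_msgI_q_eq hcode hpos
    rw [hlast] at hw
    exact add_left_cancel hw

theorem terminal_eq_of_code_eq (hcode : D.code x = D.code x') {i : Fin k}
    (hside : ∀ u, D.Arc (D.terminal i) u → x u = x' u) : x (D.terminal i) = x' (D.terminal i) := by
  have hother (j : Fin k) (hj : j ∈ Finset.univ.erase i) :
      D.msgI x j (D.n1 j) = D.msgI x' j (D.n1 j) :=
    eq_of_add_succ_eq (D.hq2 i j) (msgI_q_eq_of_terminal hcode (Finset.ne_of_mem_erase hj) hside)
      fun a ha han => msgI_add_msgI_succ_eq hcode ((D.hq1 i j).trans ha) han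
  have hw : ∑ j, D.msgI x j (D.n1 j) = ∑ j, D.msgI x' j (D.n1 j) :=
    congrFun hcode (Sum.inr (Sum.inr (Sum.inr ())))
  rw [← Finset.add_sum_erase _ _ (Finset.mem_univ i),
    ← Finset.add_sum_erase _ _ (Finset.mem_univ i), Finset.sum_congr rfl hother] at hw
  have hi := add_right_cancel hw
  rwa [msgI_of_le x (D.hn1 i) le_rfl, msgI_of_le x' (D.hn1 i) le_rfl] at hi

theorem eq_of_code_eq (hcode : D.code x = D.code x') {v : D.Vtx}
    (hside : ∀ u, D.Arc v u → x u = x' u) : x v = x' v := by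
  rcases v with ⟨i, a⟩ | ⟨⟨i, j⟩, b⟩
  · have ha := a.isLt
    by_cases hlast : (a : ℕ) = D.n1 i - 1
    · rw [D.eq_terminal hlast] at hside ⊢
      exact terminal_eq_of_code_eq hcode hside
    · have hnext : D.msgI x i (a + 2) = D.msgI x' i (a + 2) := by
        rw [msgI_of_le x (by omega) (by omega), msgI_of_le x' (by omega) (by omega)]
        exact hside _ (Or.inl ⟨rfl, rfl⟩)
      have hw := msgI_add_msgI_succ_eq hcode (i := i) (a := a + 1) (by omega) (by omega)
      rw [hnext] at hw
      have hv := add_right_cancel hw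
      rwa [msgI_of_le x (by omega) (by omega), msgI_of_le x' (by omega) (by omega)] at hv
  · have hb : (b : ℕ) < D.n2 i j := b.isLt
    by_cases hlast : (b : ℕ) = D.n2 i j - 1
    · have hpos : 1 ≤ D.n2 i j := by omega
      have hq1 := D.hq1 i j
      have hq2 := D.hq2 i j
      have hnext : D.msgI x j (D.q i j) = D.msgI x' j (D.q i j) := by
        rw [msgI_of_le x hq1 hq2, msgI_of_le x' hq1 hq2]
        exact hside _ ⟨rfl, hlast, rfl⟩
      have hw := msgII_last_add_msgI_q_eq hcode hpos
      rw [hnext] at hw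
      have hv := add_right_cancel hw
      obtain rfl : b = ⟨D.n2 i j - 1, Nat.sub_lt hpos one_pos⟩ := Fin.ext hlast
      rwa [msgII_of_le x hpos le_rfl, msgII_of_le x' hpos le_rfl] at hv
    · have hnext : D.msgII x i j (b + 2) = D.msgII x' i j (b + 2) := by
        rw [msgII_of_le x (by omega) (by omega), msgII_of_le x' (by omega) (by omega)]
        exact hside _ ⟨rfl, rfl⟩
      have hw := msgII_add_msgII_succ_eq hcode (i := i) (j := j) (b := b + 1) (by omega)
        (by omega)
      rw [hnext] at hw
      have hv := add_right_cancel hw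
      rwa [msgII_of_le x (by omega) (by omega), msgII_of_le x' (by omega) (by omega)] at hv

variable (D) in
theorem code_isIndexCode : IsIndexCode D.Arc (D.code (t := t)) :=
  isIndexCode_of_forall_eq fun _ _ _ hcode hside => eq_of_code_eq hcode hside

end Decoding

section Converse

variable {k : ℕ} (D : ICCDigraph k)

/-- Layers from top to bottom: the Type-II paths leaving `P_j` for `j ≠ r`, the path `P_r`,
the Type-II paths leaving `P_r`, the paths `P_j` for `j ≠ r`; within a path the rank counts
the vertices still ahead. -/
def rank (r : Fin k) : D.Vtx → ℕ
  | Sum.inl ⟨i, a⟩ =>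
      if i = r then 2 * Fintype.card D.Vtx + (D.n1 i - a) else D.n1 i - a
  | Sum.inr ⟨p, b⟩ =>
      if p.1 = r then Fintype.card D.Vtx + (D.n2 p.1 p.2 - b)
      else 3 * Fintype.card D.Vtx + (D.n2 p.1 p.2 - b)

theorem rank_lt_of_arc {r : Fin k} {v u : D.Vtx} (hv : ∀ j ≠ r, v ≠ D.terminal j)
    (h : D.Arc v u) : D.rank r u < D.rank r v := by
  rcases v with ⟨i, a⟩ | ⟨⟨i, j⟩, b⟩ <;> rcases u with ⟨i', a'⟩ | ⟨⟨i', j'⟩, b'⟩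
  · rcases h with ⟨rfl, ha'⟩ | ⟨hne, ha, -, -⟩
    · simp only [rank]
      split_ifs <;> omega
    · obtain rfl : i = r := by_contra fun hir => hv i hir (D.eq_terminal ha)
      have := D.n1_le_card_vtx i'
      simp only [rank, if_pos, if_neg hne.symm]
      omega
  · obtain ⟨rfl, ha, -⟩ := h
    obtain rfl : i = r := by_contra fun hir => hv i hir (D.eq_terminal ha)
    have := D.n2_le_card_vtx i j'
    simp only [rank, if_pos]
    omega
  · obtain ⟨rfl, hb, -⟩ := h
    dsimp only at hb
    have hb' : (b : ℕ) < D.n2 i j := b.isLt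
    have := D.n1_le_card_vtx j
    by_cases hir : i = r
    · have hjr : j ≠ r := by
        rintro rfl
        subst hir
        have := D.hdiag i
        omega
      simp only [rank, if_pos hir, if_neg hjr]
      omega
    · simp only [rank, if_neg hir]
      split_ifs <;> omega
  · obtain ⟨hp, hb⟩ := h
    obtain ⟨rfl, rfl⟩ := Prod.mk.inj hp
    dsimp only at *
    simp only [rank]
    split_ifs <;> omega

def acyclicSet (r : Fin k) : Finset D.Vtx :=
  Finset.univ \ (Finset.univ.erase r).image D.terminal

theorem card_acyclicSet (r : Fin k) :
    (D.acyclicSet r).card = Fintype.card D.Vtx - k + 1 := by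
  rw [acyclicSet, Finset.card_sdiff_of_subset (Finset.subset_univ _),
    Finset.card_image_of_injective _ D.terminal_injective,
    Finset.card_erase_of_mem (Finset.mem_univ _), Finset.card_univ, Finset.card_univ,
    Fintype.card_fin]
  have : k ≤ Fintype.card D.Vtx := by
    simpa using Fintype.card_le_of_injective _ D.terminal_injective
  have := r.pos
  omega

theorem rank_lt_of_arc_of_mem {r : Fin k} {v u : D.Vtx} (hv : v ∈ D.acyclicSet r)
    (h : D.Arc v u) : D.rank r u < D.rank r v := by
  refine D.rank_lt_of_arc (fun j hj hvj => ?_) h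
  simp only [acyclicSet, Finset.mem_sdiff, Finset.mem_image] at hv
  exact hv.2 ⟨j, Finset.mem_erase.2 ⟨hj, Finset.mem_univ j⟩, hvj.symm⟩

theorem le_of_isIndexCode (hk : 1 ≤ k) {t p : ℕ}
    {E : (D.Vtx → Fin t → ZMod 2) → Fin p → ZMod 2} (hE : IsIndexCode D.Arc E) :
    t * (Fintype.card D.Vtx - k + 1) ≤ p := by
  have hcard := hE.card_pow_le (D.acyclicSet ⟨0, hk⟩) (D.rank ⟨0, hk⟩)
    fun v hv _ _ => D.rank_lt_of_arc_of_mem hv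
  simp only [Fintype.card_fun, Fintype.card_fin, ZMod.card, ← pow_mul,
    card_acyclicSet] at hcard
  exact (Nat.pow_le_pow_iff_right one_lt_two).1 hcard

end Converse

end ICCDigraph

theorem stmt13_general {k t : ℕ} (hk : 1 ≤ k) (D : ICCDigraph k) :
    (∃ E : (D.Vtx → Fin t → ZMod 2) →
        Fin (t * (Fintype.card D.Vtx - k + 1)) → ZMod 2,
      ∀ v : D.Vtx,
        ∃ g : (Fin (t * (Fintype.card D.Vtx - k + 1)) → ZMod 2) →
            ({u : D.Vtx // D.Arc v u} → Fin t → ZMod 2) → (Fin t → ZMod 2),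
          ∀ x, g (E x) (fun u => x u.1) = x v) ∧
    (∀ (p : ℕ) (E : (D.Vtx → Fin t → ZMod 2) → Fin p → ZMod 2),
      (∀ v : D.Vtx,
        ∃ g : (Fin p → ZMod 2) →
            ({u : D.Vtx // D.Arc v u} → Fin t → ZMod 2) → (Fin t → ZMod 2),
          ∀ x, g (E x) (fun u => x u.1) = x v) →
      t * (Fintype.card D.Vtx - k + 1) ≤ p) := by
  refine ⟨?_, fun p E hE => D.le_of_isIndexCode hk hE⟩
  have hcard : Fintype.card (D.CodeIdx × Fin t)
      = Fintype.card (Fin (t * (Fintype.card D.Vtx - k + 1))) := by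
    rw [Fintype.card_prod, Fintype.card_fin, Fintype.card_fin, D.card_codeIdx, mul_comm]
  let toBits := (Equiv.curry _ _ (ZMod 2)).symm.trans
    ((Fintype.equivOfCardEq hcard).arrowCongr (Equiv.refl (ZMod 2)))
  exact ⟨toBits ∘ D.code, D.code_isIndexCode.comp toBits.injective⟩

/-- For any ICC digraph `D` with `k` Type-I paths, `n` vertices and
`t`-bit messages, the optimal index code length is `ℓ*_t(D) = n - k + 1` packets:
there is a valid index code using `t * (n - k + 1)` bits, and every valid index
code uses at least `t * (n - k + 1)` bits. Hence the ICC code is optimal. -/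
theorem stmt13 {k t : ℕ} (hk : 1 ≤ k) (ht : 1 ≤ t) (D : ICCDigraph k) :
    (∃ E : (D.Vtx → Fin t → ZMod 2) →
        Fin (t * (Fintype.card D.Vtx - k + 1)) → ZMod 2,
      ∀ v : D.Vtx,
        ∃ g : (Fin (t * (Fintype.card D.Vtx - k + 1)) → ZMod 2) →
            ({u : D.Vtx // D.Arc v u} → Fin t → ZMod 2) → (Fin t → ZMod 2),
          ∀ x, g (E x) (fun u => x u.1) = x v) ∧
    (∀ (p : ℕ) (E : (D.Vtx → Fin t → ZMod 2) → Fin p → ZMod 2),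
      (∀ v : D.Vtx,
        ∃ g : (Fin p → ZMod 2) →
            ({u : D.Vtx // D.Arc v u} → Fin t → ZMod 2) → (Fin t → ZMod 2),
          ∀ x, g (E x) (fun u => x u.1) = x v) →
      t * (Fintype.card D.Vtx - k + 1) ≤ p) :=
  stmt13_general hk D
end
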